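/- arXiv:2410.15310 — 5 statements merged into one kernel-verified Lean document; each statement's English description precedes it below -/
import Mathlib

section
/- For any λ > 0 and fully factorized likelihood p(Y|X,θ) = ∏_{(y,x)∈D} p(y|x,θ), the tempered posterior p_λ(θ|X,Y) ∝ p(Y|X,θ)^λ p(θ) equals a standard Bayesian posterior with new prior q(θ|X,λ) ∝ p(θ) ∏_{x∈X} ∫ p(y|x,θ)^λ dy and new per-example likelihood q(y|x,θ,λ) = p(y|x,θ)^λ / ∫ p(y'|x,θ)^λ dy'; that is, p_λ(θ|X,Y) ∝ q(θ|X,λ) ∏_{(y,x)∈D} q(y|x,θ,λ). -/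
open MeasureTheory Real

theorem Real.finsetProd_rpow_eq_prod_mul_prod_rpow_div {ι : Type*} (s : Finset ι) {f c : ι → ℝ}
    (hf : ∀ i ∈ s, 0 ≤ f i) (hc : ∀ i ∈ s, c i ≠ 0) (r : ℝ) :
    (∏ i ∈ s, f i) ^ r = (∏ i ∈ s, c i) * ∏ i ∈ s, f i ^ r / c i := by
  rw [← Finset.prod_mul_distrib, ← Real.finsetProd_rpow s f hf r]
  exact Finset.prod_congr rfl fun i hi => (mul_div_cancel₀ _ (hc i hi)).symm

theorem tempered_posterior_is_bayes_posterior_general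
    {Θ X Y : Type*}
    (n : ℕ) (x : Fin n → X) (y : Fin n → Y)
    (p : Y → X → Θ → ℝ) (hp : ∀ y' x' θ, 0 < p y' x' θ)
    (lam : ℝ)
    (c : X → Θ → ℝ)
    (hcpos : ∀ x' θ, 0 < c x' θ)
    (prior : Θ → ℝ)
    (qprior : Θ → ℝ) (hqprior : ∀ θ, qprior θ = prior θ * ∏ i, c (x i) θ)
    (qlik : Y → X → Θ → ℝ)
    (hqlik : ∀ y' x' θ, qlik y' x' θ = p y' x' θ ^ lam / c x' θ) :
    ∀ θ, (∏ i, p (y i) (x i) θ) ^ lam * prior θ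
      = qprior θ * ∏ i, qlik (y i) (x i) θ := by
  intro θ
  rw [Real.finsetProd_rpow_eq_prod_mul_prod_rpow_div _ (fun i _ => (hp _ _ θ).le)
    (fun i _ => (hcpos (x i) θ).ne')]
  simp only [hqprior, hqlik]
  ring

/-- For any `λ > 0` and fully factorized likelihood `p(Y|X,θ) = ∏_{(y,x)∈D} p(y|x,θ)`,
the (unnormalized) tempered posterior `p(Y|X,θ)^λ p(θ)` equals, up to a `θ`-independent
constant (here: exactly, in unnormalized form), the product of the new prior
`q(θ|X,λ) ∝ p(θ) ∏_{x∈X} ∫ p(y|x,θ)^λ dy` and the new per-example likelihoods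
`q(y|x,θ,λ) = p(y|x,θ)^λ / ∫ p(y'|x,θ)^λ dy'`. -/
theorem tempered_posterior_is_bayes_posterior
    {Θ X Y : Type*} [MeasurableSpace Y] (μY : Measure Y)
    (n : ℕ) (x : Fin n → X) (y : Fin n → Y)
    (p : Y → X → Θ → ℝ) (hp : ∀ y' x' θ, 0 < p y' x' θ)
    (lam : ℝ) (hlam : 0 < lam)
    (c : X → Θ → ℝ) (hc : ∀ x' θ, c x' θ = ∫ y', p y' x' θ ^ lam ∂μY)
    (hcpos : ∀ x' θ, 0 < c x' θ) (hcfin : ∀ x' θ, Integrable (fun y' => p y' x' θ ^ lam) μY)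
    (prior : Θ → ℝ)
    (qprior : Θ → ℝ) (hqprior : ∀ θ, qprior θ = prior θ * ∏ i, c (x i) θ)
    (qlik : Y → X → Θ → ℝ)
    (hqlik : ∀ y' x' θ, qlik y' x' θ = p y' x' θ ^ lam / c x' θ) :
    ∀ θ, (∏ i, p (y i) (x i) θ) ^ lam * prior θ
      = qprior θ * ∏ i, qlik (y i) (x i) θ :=
  tempered_posterior_is_bayes_posterior_general n x y p hp lam c hcpos prior qprior hqprior qlik
    hqlik
end

section
/- For a Bernoulli distribution with parameter θ ∈ (0,1) and the tempered parameter θ*(λ) = θ^λ / (θ^λ + (1-θ)^λ), the Shannon entropy H(θ*(λ)) = -θ*(λ)ln θ*(λ) - (1-θ*(λ))ln(1-θ*(λ)) is monotonically non-increasing in λ > 0. -/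
open Real Set

/-! Writing `θ*(λ) = 1 / (1 + r^λ)` with `r = (1 - θ) / θ`, the tempered parameter moves
monotonically away from `1/2` as `λ` grows, towards `0` when `r ≥ 1` and towards `1` when
`r ≤ 1`; the binary entropy is increasing on `[0, 1/2]` and symmetric under `p ↦ 1 - p`. -/

lemma rpow_div_rpow_add_rpow_eq_inv {a b : ℝ} (ha : 0 < a) (hb : 0 < b) (l : ℝ) :
    a ^ l / (a ^ l + b ^ l) = (1 + (b / a) ^ l)⁻¹ := by
  rw [div_rpow hb.le ha.le]
  field_simp

lemma binEntropy_inv_one_add_rpow_antitoneOn {r : ℝ} (hr : 1 ≤ r) :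
    AntitoneOn (fun l : ℝ => binEntropy (1 + r ^ l)⁻¹) (Ici 0) := by
  have hmem : ∀ l ∈ Ici (0 : ℝ), (1 + r ^ l)⁻¹ ∈ Icc (0 : ℝ) 2⁻¹ := fun l hl => by
    have : 1 ≤ r ^ l := one_le_rpow hr hl
    exact ⟨by positivity, inv_anti₀ two_pos (by linarith)⟩
  intro l hl m hm hlm
  refine binEntropy_strictMonoOn.monotoneOn (hmem m hm) (hmem l hl) ?_
  exact inv_anti₀ (by positivity) (by gcongr)

lemma binEntropy_rpow_div_rpow_add_rpow_antitoneOn {a b : ℝ} (ha : 0 < a) (hb : 0 < b) :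
    AntitoneOn (fun l : ℝ => binEntropy (a ^ l / (a ^ l + b ^ l))) (Ici 0) := by
  wlog hab : a ≤ b generalizing a b
  · have hsymm : ∀ l : ℝ, a ^ l / (a ^ l + b ^ l) = 1 - b ^ l / (b ^ l + a ^ l) := fun l => by
      field_simp
      ring
    simpa only [hsymm, binEntropy_one_sub] using this hb ha (le_of_not_ge hab)
  simp only [rpow_div_rpow_add_rpow_eq_inv ha hb]
  exact binEntropy_inv_one_add_rpow_antitoneOn ((one_le_div ha).2 hab)

/-- For a Bernoulli distribution with parameter `θ ∈ (0,1)` and tempered parameter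
`θ*(λ) = θ^λ / (θ^λ + (1-θ)^λ)`, the binary Shannon entropy
`H(θ*(λ)) = -θ*(λ) ln θ*(λ) - (1-θ*(λ)) ln (1-θ*(λ))` is monotonically
non-increasing in `λ > 0`. -/
theorem tempered_bernoulli_entropy_antitone
    (θ : ℝ) (hθ : θ ∈ Set.Ioo (0 : ℝ) 1)
    (θstar : ℝ → ℝ) (hθstar : ∀ lam, θstar lam = θ ^ lam / (θ ^ lam + (1 - θ) ^ lam))
    (H : ℝ → ℝ) (hH : ∀ p, H p = -(p * Real.log p) - (1 - p) * Real.log (1 - p)) :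
    AntitoneOn (fun lam => H (θstar lam)) (Set.Ioi (0 : ℝ)) := by
  have hH_eq : ∀ p, H p = binEntropy p := fun p => by
    rw [hH, binEntropy, log_inv, log_inv]
    ring
  simp only [hH_eq, hθstar]
  exact (binEntropy_rpow_div_rpow_add_rpow_antitoneOn hθ.1 (sub_pos.2 hθ.2)).mono
    Ioi_subset_Ici_self
end

section
/- A necessary condition for the cold posterior effect (i.e., d/dλ B(p_λ)|_{λ=1} < 0) is that the Bayesian posterior does not achieve the minimal empirical loss: Ĝ(p_{λ=1}, D) > min_θ (-ln p(D|θ)). -/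
open MeasureTheory Real

theorem le_integral_mul_of_ae_le_of_integral_eq_one {Θ : Type*} [MeasurableSpace Θ]
    {μ : Measure Θ} {f ρ : Θ → ℝ} {c : ℝ} (hf : ∀ᵐ θ ∂μ, c ≤ f θ) (hρ : ∀ᵐ θ ∂μ, 0 ≤ ρ θ)
    (hρ_one : ∫ θ, ρ θ ∂μ = 1) (hfρ : Integrable (fun θ => f θ * ρ θ) μ) :
    c ≤ ∫ θ, f θ * ρ θ ∂μ := by
  have hρ_int : Integrable ρ μ := by
    by_contra h
    simp [integral_undef h] at hρ_one
  calc c = ∫ θ, c * ρ θ ∂μ := by rw [integral_const_mul, hρ_one, mul_one]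
    _ ≤ ∫ θ, f θ * ρ θ ∂μ := by
      refine integral_mono_ae (hρ_int.const_mul c) hfρ ?_
      filter_upwards [hf, hρ] with θ hcf hρθ
      exact mul_le_mul_of_nonneg_right hcf hρθ

theorem cpe_implies_gibbs_above_min_general
    {Θ : Type*} [MeasurableSpace Θ] (μ : Measure Θ)
    (lik : Θ → ℝ)
    (post pbar : Θ → ℝ)
    (hpbar_nonneg : ∀ θ, 0 ≤ pbar θ) (hpbar_one : ∫ θ, pbar θ ∂μ = 1)
    (G : (Θ → ℝ) → ℝ)
    (hG : ∀ ρ, G ρ = ∫ θ, -Real.log (lik θ) * ρ θ ∂μ)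
    (hGint' : Integrable (fun θ => -Real.log (lik θ) * pbar θ) μ)
    (B : ℝ → ℝ)
    (hderiv : deriv B 1 = G pbar - G post)
    (θ₀ : Θ) (hmin : ∀ θ, -Real.log (lik θ₀) ≤ -Real.log (lik θ))
    (hcpe : deriv B 1 < 0) :
    -Real.log (lik θ₀) < G post := by
  have hmin_le_pbar : -Real.log (lik θ₀) ≤ G pbar := hG pbar ▸
    le_integral_mul_of_ae_le_of_integral_eq_one (.of_forall hmin) (.of_forall hpbar_nonneg)
      hpbar_one hGint'
  linarith

/-- A necessary condition for the cold posterior effect (`d/dλ B(p_λ)|_{λ=1} < 0`) is that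
the Bayesian posterior does not achieve the minimal empirical loss:
`Ĝ(p_{λ=1}, D) > min_θ (-ln p(D|θ))`. The derivative identity
`d/dλ B(p_λ)|_{λ=1} = Ĝ(p̄_{λ=1},D) - Ĝ(p_{λ=1},D)` is assumed, `Ĝ(ρ,D) = E_ρ[-ln p(D|θ)]`
is the (unnormalized) empirical Gibbs loss, and the minimum is attained at some `θ₀`. -/
theorem cpe_implies_gibbs_above_min
    {Θ : Type*} [MeasurableSpace Θ] (μ : Measure Θ)
    (lik : Θ → ℝ) (hlik : ∀ θ, 0 < lik θ)
    (post pbar : Θ → ℝ)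
    (hpost_nonneg : ∀ θ, 0 ≤ post θ) (hpost_one : ∫ θ, post θ ∂μ = 1)
    (hpbar_nonneg : ∀ θ, 0 ≤ pbar θ) (hpbar_one : ∫ θ, pbar θ ∂μ = 1)
    (G : (Θ → ℝ) → ℝ)
    (hG : ∀ ρ, G ρ = ∫ θ, -Real.log (lik θ) * ρ θ ∂μ)
    (hGint : Integrable (fun θ => -Real.log (lik θ) * post θ) μ)
    (hGint' : Integrable (fun θ => -Real.log (lik θ) * pbar θ) μ)
    (B : ℝ → ℝ)
    (hderiv : deriv B 1 = G pbar - G post)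
    (θ₀ : Θ) (hmin : ∀ θ, -Real.log (lik θ₀) ≤ -Real.log (lik θ))
    (hcpe : deriv B 1 < 0) :
    -Real.log (lik θ₀) < G post :=
  cpe_implies_gibbs_above_min_general μ lik post pbar hpbar_nonneg hpbar_one G hG hGint' B hderiv θ₀
    hmin hcpe
end

section
/- The derivative of the expected Gibbs loss of the tempered posterior satisfies d/dλ G(p_λ) = -Cov_{p_λ}(n L̂(D,θ), L(θ)), where L̂(D,θ) = -(1/n) ln p(D|θ) is the empirical loss and L(θ) is the expected loss. -/
open MeasureTheory Real

/-! With `w_λ = lik^λ · prior`, the Gibbs loss is the ratio `G = N / Z` of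
`N(λ) = ∫ L w_λ` and `Z(λ) = ∫ w_λ`. Differentiating under the integral sign brings down a
factor `ln lik = -n L̂`, so the quotient rule gives
`G' = E[ln lik · L] - E[ln lik] · E[L] = -Cov(n L̂, L)`. -/

theorem HasDerivAt.div_eq_sub_mul_div {N Z : ℝ → ℝ} {N' Z' x : ℝ} (hN : HasDerivAt N N' x)
    (hZ : HasDerivAt Z Z' x) (hx : Z x ≠ 0) :
    HasDerivAt (fun t => N t / Z t) (N' / Z x - N x / Z x * (Z' / Z x)) x :=
  (hN.div hZ hx).congr_deriv (by field_simp)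

theorem deriv_expected_gibbs_eq_neg_cov_general
    {Θ : Type*} [MeasurableSpace Θ]
    (μ : Measure Θ)
    (prior lik : Θ → ℝ) (n : ℕ) (hn : 0 < n)
    (L : Θ → ℝ)
    (Lhat : Θ → ℝ) (hLhat : ∀ θ, Lhat θ = -(1 / (n : ℝ)) * Real.log (lik θ))
    (Z : ℝ → ℝ)
    (E : ℝ → (Θ → ℝ) → ℝ)
    (hE : ∀ lam g, E lam g = (∫ θ, g θ * (lik θ ^ lam * prior θ) ∂μ) / Z lam)
    (Cov : ℝ → (Θ → ℝ) → (Θ → ℝ) → ℝ)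
    (hCov : ∀ lam g₁ g₂, Cov lam g₁ g₂ = E lam (fun θ => g₁ θ * g₂ θ) - E lam g₁ * E lam g₂)
    (G : ℝ → ℝ) (hG : ∀ lam, G lam = E lam L)
    (lam₀ : ℝ) (hZpos : 0 < Z lam₀)
    (hderivZ : HasDerivAt Z (∫ θ, Real.log (lik θ) * (lik θ ^ lam₀ * prior θ) ∂μ) lam₀)
    (hderivNum : HasDerivAt (fun lam => ∫ θ, L θ * (lik θ ^ lam * prior θ) ∂μ)
      (∫ θ, Real.log (lik θ) * L θ * (lik θ ^ lam₀ * prior θ) ∂μ) lam₀) :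
    HasDerivAt G (-(Cov lam₀ (fun θ => (n : ℝ) * Lhat θ) L)) lam₀ := by
  have hG_eq : G = fun lam => (∫ θ, L θ * (lik θ ^ lam * prior θ) ∂μ) / Z lam := by
    funext lam
    rw [hG, hE]
  have hn_mul_Lhat : ∀ θ, (n : ℝ) * Lhat θ = -Real.log (lik θ) := by
    intro θ
    rw [hLhat]
    field_simp [Nat.cast_ne_zero.mpr hn.ne']
  rw [hG_eq]
  convert hderivNum.div_eq_sub_mul_div hderivZ hZpos.ne' using 1
  simp only [hCov, hE, hn_mul_Lhat, neg_mul, integral_neg]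
  ring

/-- The derivative of the expected Gibbs loss of the tempered posterior satisfies
`d/dλ G(p_λ) = -Cov_{p_λ}(n L̂(D,θ), L(θ))`, where `L̂(D,θ) = -(1/n) ln p(D|θ)` is the
empirical loss and `L(θ) = E_ν[-ln p(y|x,θ)]` is the expected loss. Regularity
(differentiation under the integral sign) is encoded by the `HasDerivAt` hypotheses. -/
theorem deriv_expected_gibbs_eq_neg_cov
    {Θ Zt : Type*} [MeasurableSpace Θ] [MeasurableSpace Zt]
    (μ : Measure Θ) (ν : Measure Zt) [IsProbabilityMeasure ν]
    (prior lik : Θ → ℝ) (pe : Zt → Θ → ℝ) (n : ℕ) (hn : 0 < n)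
    (hprior : ∀ θ, 0 ≤ prior θ) (hlik : ∀ θ, 0 < lik θ) (hpe : ∀ z θ, 0 < pe z θ)
    (L : Θ → ℝ) (hL : ∀ θ, L θ = ∫ z, -Real.log (pe z θ) ∂ν)
    (Lhat : Θ → ℝ) (hLhat : ∀ θ, Lhat θ = -(1 / (n : ℝ)) * Real.log (lik θ))
    (Z : ℝ → ℝ) (hZ : ∀ lam, Z lam = ∫ θ, lik θ ^ lam * prior θ ∂μ)
    (E : ℝ → (Θ → ℝ) → ℝ)
    (hE : ∀ lam g, E lam g = (∫ θ, g θ * (lik θ ^ lam * prior θ) ∂μ) / Z lam)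
    (Cov : ℝ → (Θ → ℝ) → (Θ → ℝ) → ℝ)
    (hCov : ∀ lam g₁ g₂, Cov lam g₁ g₂ = E lam (fun θ => g₁ θ * g₂ θ) - E lam g₁ * E lam g₂)
    (G : ℝ → ℝ) (hG : ∀ lam, G lam = E lam L)
    (lam₀ : ℝ) (hlam₀ : 0 < lam₀) (hZpos : 0 < Z lam₀)
    (hderivZ : HasDerivAt Z (∫ θ, Real.log (lik θ) * (lik θ ^ lam₀ * prior θ) ∂μ) lam₀)
    (hderivNum : HasDerivAt (fun lam => ∫ θ, L θ * (lik θ ^ lam * prior θ) ∂μ)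
      (∫ θ, Real.log (lik θ) * L θ * (lik θ ^ lam₀ * prior θ) ∂μ) lam₀) :
    HasDerivAt G (-(Cov lam₀ (fun θ => (n : ℝ) * Lhat θ) L)) lam₀ :=
  deriv_expected_gibbs_eq_neg_cov_general μ prior lik n hn L Lhat hLhat Z E hE Cov hCov G hG lam₀
    hZpos hderivZ hderivNum
end

section
/- Recursive PAC-Bayes bound (high-level form): given the events that (i) E_{π_1}[L(h)] < B_1(π_1) for all π_1 ∈ P_1 and (ii) for each t ∈ {2,...,T}, E_{π_t}[L(h) - γ_t E_{π*_{t-1}}[L(h')]] < E_t(π_t, γ_t) for all π_t ∈ P_t, each holding with probability at least 1 - δ/T, then with probability at least 1-δ, simultaneously for all t and all π_t ∈ P_t, E_{π_t}[L(h)] < B_t(π_t), where B_t(π_t) = E_t(π_t, γ_t) + γ_t B_{t-1}(π*_{t-1}) is defined recursively. -/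
open MeasureTheory

/-!
Outside the union of the `T` failure events, each of probability at most `δ / T`, all the
bounds hold by induction on `t`: the excess-loss bound at step `t` together with the bound
`E_{π*_{t-1}}[L] < B_{t-1}(π*_{t-1})` from step `t - 1` gives
`E_π[L] < E_t(π) + γ_t B_{t-1}(π*_{t-1}) = B_t(π)`, because `γ_t ≥ 0`.
-/

theorem ENNReal.natCast_mul_ofReal_div_le (n : ℕ) (δ : ℝ) :
    (n : ENNReal) * ENNReal.ofReal (δ / n) ≤ ENNReal.ofReal δ := by
  rcases Nat.eq_zero_or_pos n with rfl | hn
  · simp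
  · rw [← ENNReal.ofReal_natCast, ← ENNReal.ofReal_mul (Nat.cast_nonneg n),
      mul_div_cancel₀ δ (Nat.cast_ne_zero.mpr hn.ne')]

theorem MeasureTheory.measure_biUnion_finset_le_card_mul {Ω ι : Type*} [MeasurableSpace Ω]
    (μ : Measure Ω) (s : Finset ι) (A : ι → Set Ω) {ε : ENNReal}
    (hA : ∀ i ∈ s, μ (A i) ≤ ε) :
    μ (⋃ i ∈ s, A i) ≤ s.card * ε :=
  calc μ (⋃ i ∈ s, A i) ≤ ∑ i ∈ s, μ (A i) := measure_biUnion_finset_le s A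
    _ ≤ s.card • ε := Finset.sum_le_card_nsmul s _ ε hA
    _ = s.card * ε := nsmul_eq_mul _ _

theorem lt_bound_of_lt_base_of_lt_excess {α : Type*} (T : ℕ) (Ps : ℕ → Set α)
    (πstar : ℕ → α) (hπstar : ∀ t ∈ Finset.Icc 1 T, πstar t ∈ Ps t)
    (γ : ℕ → ℝ) (hγ : ∀ t ∈ Finset.Icc 2 T, 0 ≤ γ t)
    (ℓ : α → ℝ) (E B : ℕ → α → ℝ)
    (hBrec : ∀ t ∈ Finset.Icc 2 T, ∀ π, B t π = E t π + γ t * B (t - 1) (πstar (t - 1)))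
    (hbase : ∀ π ∈ Ps 1, ℓ π < B 1 π)
    (hexcess : ∀ t ∈ Finset.Icc 2 T, ∀ π ∈ Ps t, ℓ π - γ t * ℓ (πstar (t - 1)) < E t π) :
    ∀ t ∈ Finset.Icc 1 T, ∀ π ∈ Ps t, ℓ π < B t π := by
  intro t ht
  obtain ⟨h1t, htT⟩ := Finset.mem_Icc.mp ht
  induction t, h1t using Nat.le_induction with
  | base => exact hbase
  | succ t h1t ih =>
    intro π hπ
    have ht2 : t + 1 ∈ Finset.Icc 2 T := Finset.mem_Icc.mpr ⟨by omega, htT⟩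
    have hprev : ℓ (πstar t) < B t (πstar t) :=
      ih (Finset.mem_Icc.mpr ⟨h1t, by omega⟩) (by omega) _
        (hπstar t (Finset.mem_Icc.mpr ⟨h1t, by omega⟩))
    have hexc := hexcess (t + 1) ht2 π hπ
    have hγprev := mul_le_mul_of_nonneg_left hprev.le (hγ (t + 1) ht2)
    rw [hBrec (t + 1) ht2]
    simp only [Nat.add_sub_cancel] at hexc ⊢
    linarith

theorem recursive_pac_bayes_bound_general
    {Ω H : Type*} [MeasurableSpace Ω] [MeasurableSpace H]
    (P : Measure Ω)
    (T : ℕ)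
    (L : H → ℝ)
    (Ps : ℕ → Set (Measure H))
    (πstar : ℕ → Measure H) (hπstar : ∀ t ∈ Finset.Icc 1 T, πstar t ∈ Ps t)
    (γ : ℕ → ℝ) (hγ : ∀ t ∈ Finset.Icc 2 T, γ t ∈ Set.Ioo (0 : ℝ) 1)
    (B1 : Measure H → Ω → ℝ)
    (Ebd : ℕ → Measure H → Ω → ℝ)
    (B : ℕ → Measure H → Ω → ℝ)
    (hBbase : ∀ π ω, B 1 π ω = B1 π ω)
    (hBrec : ∀ t ∈ Finset.Icc 2 T, ∀ π ω,
      B t π ω = Ebd t π ω + γ t * B (t - 1) (πstar (t - 1)) ω)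
    (δ : ℝ)
    (h1 : P {ω | ∃ π ∈ Ps 1, B1 π ω ≤ ∫ h, L h ∂π} ≤ ENNReal.ofReal (δ / T))
    (h2 : ∀ t ∈ Finset.Icc 2 T,
      P {ω | ∃ π ∈ Ps t,
          Ebd t π ω ≤ (∫ h, L h ∂π) - γ t * ∫ h, L h ∂(πstar (t - 1))}
        ≤ ENNReal.ofReal (δ / T)) :
    P {ω | ∃ t ∈ Finset.Icc 1 T, ∃ π ∈ Ps t, B t π ω ≤ ∫ h, L h ∂π}
      ≤ ENNReal.ofReal δ := by
  classical
  set failure : ℕ → Set Ω := fun t =>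
    if t = 1 then {ω | ∃ π ∈ Ps 1, B1 π ω ≤ ∫ h, L h ∂π}
    else {ω | ∃ π ∈ Ps t, Ebd t π ω ≤ (∫ h, L h ∂π) - γ t * ∫ h, L h ∂(πstar (t - 1))}
  have hfailure : ∀ t ∈ Finset.Icc 1 T, P (failure t) ≤ ENNReal.ofReal (δ / T) := by
    intro t ht
    by_cases h : t = 1
    · simpa [failure, h] using h1
    · simpa [failure, h] using h2 t (by grind)
  have hsub : {ω | ∃ t ∈ Finset.Icc 1 T, ∃ π ∈ Ps t, B t π ω ≤ ∫ h, L h ∂π}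
      ⊆ ⋃ t ∈ Finset.Icc 1 T, failure t := by
    intro ω ⟨t, ht, π, hπ, hfail⟩
    by_contra hgood
    simp only [Set.mem_iUnion, not_exists] at hgood
    refine (lt_bound_of_lt_base_of_lt_excess T Ps πstar hπstar γ (fun t ht => (hγ t ht).1.le)
      (fun π => ∫ h, L h ∂π) (Ebd · · ω) (B · · ω) (fun t ht π => hBrec t ht π ω) ?_ ?_
      t ht π hπ).not_ge hfail
    · have hT : 1 ≤ T := by grind
      simpa [failure, hBbase, hT] using hgood 1
    · intro t ht
      have ht1 : t ≠ 1 := by grind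
      simpa [failure, ht1] using hgood t (by grind)
  calc _ ≤ P (⋃ t ∈ Finset.Icc 1 T, failure t) := measure_mono hsub
    _ ≤ (Finset.Icc 1 T).card * ENNReal.ofReal (δ / T) :=
      measure_biUnion_finset_le_card_mul P _ failure hfailure
    _ ≤ ENNReal.ofReal δ := by
      simpa using ENNReal.natCast_mul_ofReal_div_le T δ

/-- Recursive PAC-Bayes bound (high-level form): given that with probability at most
`δ/T` the base bound `B₁` fails on some `π ∈ Ps 1`, and for each `t ∈ {2,...,T}` with
probability at most `δ/T` the excess-loss bound `E_t` fails on some `π ∈ Ps t`, then with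
probability at least `1 - δ`, simultaneously for all `t` and all `π_t ∈ Ps t`,
`E_{π_t}[L(h)] < B_t(π_t)`, where `B_t(π) = E_t(π, γ_t) + γ_t B_{t-1}(π*_{t-1})` is
defined recursively from `B_1 = B₁`. -/
theorem recursive_pac_bayes_bound
    {Ω H : Type*} [MeasurableSpace Ω] [MeasurableSpace H]
    (P : Measure Ω) [IsProbabilityMeasure P]
    (T : ℕ) (hT : 1 ≤ T)
    (L : H → ℝ) (hL : ∀ h, L h ∈ Set.Icc (0 : ℝ) 1)
    (Ps : ℕ → Set (Measure H))
    (hprob : ∀ t ∈ Finset.Icc 1 T, ∀ ρ ∈ Ps t, IsProbabilityMeasure ρ)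
    (πstar : ℕ → Measure H) (hπstar : ∀ t ∈ Finset.Icc 1 T, πstar t ∈ Ps t)
    (γ : ℕ → ℝ) (hγ : ∀ t ∈ Finset.Icc 2 T, γ t ∈ Set.Ioo (0 : ℝ) 1)
    (B1 : Measure H → Ω → ℝ)
    (Ebd : ℕ → Measure H → Ω → ℝ)
    (B : ℕ → Measure H → Ω → ℝ)
    (hBbase : ∀ π ω, B 1 π ω = B1 π ω)
    (hBrec : ∀ t ∈ Finset.Icc 2 T, ∀ π ω,
      B t π ω = Ebd t π ω + γ t * B (t - 1) (πstar (t - 1)) ω)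
    (δ : ℝ) (hδ : δ ∈ Set.Ioo (0 : ℝ) 1)
    (h1 : P {ω | ∃ π ∈ Ps 1, B1 π ω ≤ ∫ h, L h ∂π} ≤ ENNReal.ofReal (δ / T))
    (h2 : ∀ t ∈ Finset.Icc 2 T,
      P {ω | ∃ π ∈ Ps t,
          Ebd t π ω ≤ (∫ h, L h ∂π) - γ t * ∫ h, L h ∂(πstar (t - 1))}
        ≤ ENNReal.ofReal (δ / T)) :
    P {ω | ∃ t ∈ Finset.Icc 1 T, ∃ π ∈ Ps t, B t π ω ≤ ∫ h, L h ∂π}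
      ≤ ENNReal.ofReal δ :=
  recursive_pac_bayes_bound_general P T L Ps πstar hπstar γ hγ B1 Ebd B hBbase hBrec δ h1 h2
end
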